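/- For S₁ = [[1, 1/√2],[0, 1]] and S₂ = [[1, √3/2],[-1, -√3/2]], one has S₂ = u vᵀ with u = (1,-1)ᵀ, v = (1, √3/2)ᵀ, S₂^m = (1 - √3/2)^{m-1} S₂ for all m ≥ 1, and ρ(S₁^ℓ S₂^m) = (ℓ/√2 + √3/2 - 1)·(1 - √3/2)^{m-1} for all ℓ ≥ 1, m ≥ 1, where ρ is the spectral radius. -/

import Mathlib

/-!
`S₂ = u vᵀ` has rank one, so `(u vᵀ)^m = (v ⬝ᵥ u)^(m-1) • u vᵀ` and
`S₁^ℓ S₂^m = (v ⬝ᵥ u)^(m-1) • (S₁^ℓ u) vᵀ` has rank one as well. A rank-one matrix `x yᵀ` has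
characteristic polynomial `X^(d-1) (X - x ⬝ᵥ y)`, so its spectral radius is `|x ⬝ᵥ y|`, and
here `|v ⬝ᵥ (S₁^ℓ u)| = ℓ/√2 + √3/2 - 1`.
-/

open Matrix

/-- The spectral radius of a real square matrix: the maximum of the moduli of its
complex eigenvalues. -/
noncomputable def specRad {d : ℕ} (A : Matrix (Fin d) (Fin d) ℝ) : ENNReal :=
  spectralRadius ℂ (A.map (Complex.ofReal))

open Polynomial

namespace Matrix

variable {n : Type*} [Fintype n] [DecidableEq n]

theorem vecMulVec_pow_succ {R : Type*} [CommSemiring R] (u v : n → R) (k : ℕ) :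
    vecMulVec u v ^ (k + 1) = (v ⬝ᵥ u) ^ k • vecMulVec u v := by
  induction k with
  | zero => simp
  | succ k ih =>
    rw [pow_succ, ih, smul_mul_assoc, vecMulVec_mul_vecMulVec, vecMulVec_smul, smul_smul,
      pow_succ]

section Spectrum

variable {K : Type*} [Field K]

theorem spectrum_vecMulVec_subset (u v : n → K) :
    spectrum K (vecMulVec u v) ⊆ {0, u ⬝ᵥ v} := by
  intro r hr
  rw [mem_spectrum_iff_isRoot_charpoly, charpoly_vecMulVec, IsRoot.def] at hr
  rcases (Fintype.card n).eq_zero_or_pos with hcard | hcard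
  · have : IsEmpty n := Fintype.card_eq_zero_iff.mp hcard
    simp at hr
  · obtain ⟨k, hk⟩ := Nat.exists_eq_add_of_lt hcard
    simp only [hk, eval_sub, eval_smul, eval_pow, eval_X, smul_eq_mul, zero_add,
      Nat.add_sub_cancel] at hr
    have hfactor : r ^ k * (r - u ⬝ᵥ v) = 0 := by linear_combination hr
    rcases mul_eq_zero.mp hfactor with h | h
    · exact Or.inl (pow_eq_zero_iff'.mp h).1
    · exact Or.inr (sub_eq_zero.mp h)

theorem dotProduct_mem_spectrum_vecMulVec [Nonempty n] (u v : n → K) :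
    u ⬝ᵥ v ∈ spectrum K (vecMulVec u v) := by
  rw [mem_spectrum_iff_isRoot_charpoly, charpoly_vecMulVec, IsRoot.def]
  obtain ⟨k, hk⟩ := Nat.exists_eq_add_of_lt (Fintype.card_pos (α := n))
  simp only [hk, eval_sub, eval_smul, eval_pow, eval_X, smul_eq_mul, zero_add,
    Nat.add_sub_cancel]
  ring

end Spectrum

theorem spectralRadius_vecMulVec {𝕜 : Type*} [NormedField 𝕜] [Nonempty n] (u v : n → 𝕜) :
    spectralRadius 𝕜 (vecMulVec u v) = ‖u ⬝ᵥ v‖₊ := by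
  refine le_antisymm (iSup₂_le fun r hr => ?_)
    (le_iSup₂ (f := fun r _ => (‖r‖₊ : ENNReal)) _ (dotProduct_mem_spectrum_vecMulVec u v))
  rcases spectrum_vecMulVec_subset u v hr with rfl | rfl <;> simp

theorem unitriangular_fin_two_pow {R : Type*} [CommRing R] (a : R) (k : ℕ) :
    !![1, a; 0, 1] ^ k = !![1, k * a; 0, 1] := by
  induction k with
  | zero => simp [one_fin_two]
  | succ k ih => rw [pow_succ, ih, mul_fin_two]; push_cast; ring_nf

end Matrix

theorem specRad_vecMulVec {d : ℕ} [NeZero d] (u v : Fin d → ℝ) :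
    specRad (vecMulVec u v) = ENNReal.ofReal |u ⬝ᵥ v| := by
  have hmap : (vecMulVec u v).map Complex.ofReal =
      vecMulVec (Complex.ofReal ∘ u) (Complex.ofReal ∘ v) := by
    ext; simp [vecMulVec_apply]
  have hdot : (Complex.ofReal ∘ u) ⬝ᵥ (Complex.ofReal ∘ v) = ((u ⬝ᵥ v : ℝ) : ℂ) := by
    simp [dotProduct]
  rw [specRad, hmap, spectralRadius_vecMulVec, hdot, Complex.nnnorm_real, ← enorm_eq_nnnorm,
    Real.enorm_eq_ofReal_abs]

lemma one_lt_one_div_sqrt_two_add_sqrt_three_div_two :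
    1 < 1 / Real.sqrt 2 + Real.sqrt 3 / 2 := by
  have h2 : 1 / 2 < 1 / Real.sqrt 2 :=
    one_div_lt_one_div_of_lt (by positivity) ((Real.sqrt_lt' two_pos).mpr (by norm_num))
  have h3 : 1 < Real.sqrt 3 := Real.lt_sqrt_of_sq_lt (by norm_num)
  linarith

lemma sqrt_three_div_two_lt_one : Real.sqrt 3 / 2 < 1 := by
  rw [div_lt_one two_pos, Real.sqrt_lt' two_pos]; norm_num

theorem stmt9 (S₁ S₂ : Matrix (Fin 2) (Fin 2) ℝ)
    (h₁ : S₁ = !![1, 1 / Real.sqrt 2; 0, 1])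
    (h₂ : S₂ = !![1, Real.sqrt 3 / 2; -1, -(Real.sqrt 3 / 2)]) :
    S₂ = vecMulVec ![1, -1] ![1, Real.sqrt 3 / 2] ∧
    (∀ m : ℕ, 1 ≤ m → S₂ ^ m = (1 - Real.sqrt 3 / 2) ^ (m - 1) • S₂) ∧
    (∀ ℓ m : ℕ, 1 ≤ ℓ → 1 ≤ m →
      specRad (S₁ ^ ℓ * S₂ ^ m) =
        ENNReal.ofReal
          (((ℓ : ℝ) / Real.sqrt 2 + Real.sqrt 3 / 2 - 1) *
            (1 - Real.sqrt 3 / 2) ^ (m - 1))) := by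
  have hS₂ : S₂ = vecMulVec ![1, -1] ![1, Real.sqrt 3 / 2] := by
    rw [h₂]; ext i j; fin_cases i <;> fin_cases j <;> simp [vecMulVec_apply]
  have hdot : ![1, Real.sqrt 3 / 2] ⬝ᵥ ![1, -1] = 1 - Real.sqrt 3 / 2 := by
    rw [vec2_dotProduct']; ring
  have hpow : ∀ m : ℕ, 1 ≤ m → S₂ ^ m = (1 - Real.sqrt 3 / 2) ^ (m - 1) • S₂ := by
    rintro m hm
    obtain ⟨k, rfl⟩ := Nat.exists_eq_add_of_le' hm
    rw [hS₂, vecMulVec_pow_succ, hdot, Nat.add_sub_cancel]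
  refine ⟨hS₂, hpow, fun ℓ m hℓ hm => ?_⟩
  have hprod : S₁ ^ ℓ * S₂ ^ m = vecMulVec
      ((1 - Real.sqrt 3 / 2) ^ (m - 1) • S₁ ^ ℓ *ᵥ ![1, -1]) ![1, Real.sqrt 3 / 2] := by
    rw [hpow m hm, hS₂, mul_smul_comm, mul_vecMulVec, smul_vecMulVec]
  have hpos : 0 < ((ℓ : ℝ) / Real.sqrt 2 + Real.sqrt 3 / 2 - 1) *
      (1 - Real.sqrt 3 / 2) ^ (m - 1) := by
    have hℓ' : 1 / Real.sqrt 2 ≤ ℓ / Real.sqrt 2 := by gcongr; exact_mod_cast hℓ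
    have := one_lt_one_div_sqrt_two_add_sqrt_three_div_two
    exact mul_pos (by linarith) (pow_pos (sub_pos.mpr sqrt_three_div_two_lt_one) _)
  rw [hprod, specRad_vecMulVec, h₁, unitriangular_fin_two_pow, ← abs_of_pos hpos, ← abs_neg]
  congr 2
  rw [smul_dotProduct, vec2_dotProduct]
  simp only [mulVec, vec2_dotProduct, of_apply, cons_val', cons_val_zero, cons_val_one, empty_val',
    cons_val_fin_one, smul_eq_mul]
  ring
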